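/- arXiv:math/9902161 — 2 statements merged into one kernel-verified Lean document; each statement's English description precedes it below -/
import Mathlib

section
/- Local insertion of patterns into bond animals (Proposition 3.1, bond-animal case of Axiom (CA4) on Z^d): Let d ≥ 2 and let P = (P_1, P_2) be a proper pattern for bond animals on Z^d. Then there exists a finite set D of sites and bonds of Z^d with the following property: for every bond animal G on Z^d and every site y of G, there exist a bond animal G' and a vector t ∈ Z^d such that y is a site of D+t, G' contains the pattern P+t, and the sets of sites and bonds of G' lying outside D+t coincide exactly with the sets of sites and bonds of G lying outside D+t. -/
open Filter

/-- A site of the `d`-dimensional hypercubic lattice. -/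
abbrev Site (d : ℕ) := Fin d → ℤ

/-- A (pre)graph in `ℤ^d`: a finite set of sites together with a finite set of
(unordered) bonds.  No conditions are imposed at this stage; this is also used as a
container for the two parts of a pattern, and for the set `D` of Axiom (CA4). -/
structure PreGraph (d : ℕ) where
  sites : Finset (Site d)
  bonds : Finset (Sym2 (Site d))

/-- `b` is a bond of the hypercubic lattice `ℤ^d`: an unordered pair `{x,y}` with
`‖x - y‖₁ = 1`. -/
def IsLatticeBond {d : ℕ} (b : Sym2 (Site d)) : Prop :=
  ∃ x y : Site d, b = s(x, y) ∧ (∑ i, |x i - y i|) = 1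

/-- Adjacency inside the graph `G`. -/
def Adj {d : ℕ} (G : PreGraph d) (x y : Site d) : Prop := s(x, y) ∈ G.bonds

/-- `G` is a (bond) animal with respect to the set of allowed lattice bonds `Bd`:
a finite nonempty connected subgraph of the lattice whose bond set is `Bd`. -/
def IsAnimalOn {d : ℕ} (Bd : Sym2 (Site d) → Prop) (G : PreGraph d) : Prop :=
  G.sites.Nonempty ∧
  (∀ b ∈ G.bonds, Bd b) ∧
  (∀ b ∈ G.bonds, ∀ x ∈ b, x ∈ G.sites) ∧
  (∀ x ∈ G.sites, ∀ y ∈ G.sites, Relation.ReflTransGen (Adj G) x y)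

/-- A bond animal on the hypercubic lattice `ℤ^d`. -/
def IsBondAnimal {d : ℕ} (G : PreGraph d) : Prop := IsAnimalOn IsLatticeBond G

/-- `G` contains a cycle: there are `n ≥ 3` distinct sites arranged cyclically with
consecutive ones joined by bonds of `G`. -/
def HasCycle {d : ℕ} (G : PreGraph d) : Prop :=
  ∃ (n : ℕ) (f : ZMod n → Site d), 3 ≤ n ∧ Function.Injective f ∧
    ∀ i : ZMod n, s(f i, f (i + 1)) ∈ G.bonds

/-- A bond tree: a bond animal containing no cycles. -/
def IsBondTree {d : ℕ} (G : PreGraph d) : Prop := IsBondAnimal G ∧ ¬ HasCycle G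

/-- A site animal: a bond animal containing every lattice bond both of whose
endpoints are sites of the animal. -/
def IsSiteAnimal {d : ℕ} (G : PreGraph d) : Prop :=
  IsBondAnimal G ∧
  ∀ b : Sym2 (Site d), IsLatticeBond b → (∀ x ∈ b, x ∈ G.sites) → b ∈ G.bonds

/-- The translateCluster `G + u`. -/
def translateCluster {d : ℕ} (G : PreGraph d) (u : Site d) : PreGraph d :=
  ⟨G.sites.image (· + u), G.bonds.image (Sym2.map (· + u))⟩

/-- `G` contains the pattern `(P₁, P₂)`: all sites and bonds of `P₁` belong to `G`,
and no site or bond of `P₂` belongs to `G`. -/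
def ContainsPattern {d : ℕ} (G P₁ P₂ : PreGraph d) : Prop :=
  P₁.sites ⊆ G.sites ∧ P₁.bonds ⊆ G.bonds ∧
  (∀ x ∈ P₂.sites, x ∉ G.sites) ∧ (∀ b ∈ P₂.bonds, b ∉ G.bonds)

/-- `(P₁, P₂)` is a pattern: `P₁` and `P₂` are (finite) disjoint sets of sites and
bonds, with `P₁` nonempty. -/
def IsPattern {d : ℕ} (P₁ P₂ : PreGraph d) : Prop :=
  (P₁.sites.Nonempty ∨ P₁.bonds.Nonempty) ∧
  Disjoint P₁.sites P₂.sites ∧ Disjoint P₁.bonds P₂.bonds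

/-- `(P₁, P₂)` is a proper pattern for the class `C` of clusters: for infinitely
many `n`, some cluster in `C` of size `n` contains the pattern. -/
def ProperFor {d : ℕ} (C : PreGraph d → Prop) (P₁ P₂ : PreGraph d) : Prop :=
  {n : ℕ | ∃ G : PreGraph d, C G ∧ G.sites.card = n ∧ ContainsPattern G P₁ P₂}.Infinite

/-- `|τ_P(G)|`: the number of translates of the pattern `(P₁, P₂)` occurring in `G`. -/
noncomputable def patternCount {d : ℕ} (P₁ P₂ G : PreGraph d) : ℕ :=
  {x : Site d | ContainsPattern G (translateCluster P₁ x) (translateCluster P₂ x)}.ncard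

/-- Lexicographic (strict) order on sites. -/
def LexLt {d : ℕ} (x y : Site d) : Prop :=
  ∃ i : Fin d, (∀ j, j < i → x j = y j) ∧ x i < y i

/-- The lexicographically smallest site of `G` is the origin. -/
def LexMinAtOrigin {d : ℕ} (G : PreGraph d) : Prop :=
  (0 : Site d) ∈ G.sites ∧ ∀ x ∈ G.sites, x = 0 ∨ LexLt 0 x

/-- `C*_n` for the class `C`: clusters in `C` of size `n` (number of sites) whose
lexicographically smallest site is the origin; one representative per translation
class. -/
def Cstar {d : ℕ} (C : PreGraph d → Prop) (n : ℕ) : Set (PreGraph d) :=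
  {G | C G ∧ G.sites.card = n ∧ LexMinAtOrigin G}

open scoped ENNReal

/-- Axiom (CA2) for an `ℝ≥0∞`-valued weight function on the class `C`. -/
def CA2 {d : ℕ} (C : PreGraph d → Prop) (wt : PreGraph d → ℝ≥0∞) : Prop :=
  ∀ m : ℕ, ∃ γ : ℝ≥0∞, γ ≠ 0 ∧ γ ≠ ⊤ ∧
    ∀ G G' : PreGraph d, C G → C G' →
      (symmDiff G.sites G'.sites).card + (symmDiff G.bonds G'.bonds).card ≤ m →
      wt G / γ ≤ wt G' ∧ wt G' ≤ γ * wt G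

/-- A weight function on the class `C`: positive and finite on clusters,
translation invariant, and satisfying (CA2). -/
def IsWeight {d : ℕ} (C : PreGraph d → Prop) (wt : PreGraph d → ℝ≥0∞) : Prop :=
  (∀ G, C G → wt G ≠ 0 ∧ wt G ≠ ⊤) ∧
  (∀ (G : PreGraph d) (u : Site d), wt (translateCluster G u) = wt G) ∧
  CA2 C wt

/-- Weighted sum of a set of clusters (`ℝ≥0∞`-valued weights). -/
noncomputable def Gsum {d : ℕ} (S : Set (PreGraph d)) (wt : PreGraph d → ℝ≥0∞) : ℝ≥0∞ :=
  ∑' G : S, wt G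

/-- Weighted sum of a set of clusters (real-valued weights). -/
noncomputable def GsumR {d : ℕ} (S : Set (PreGraph d)) (f : PreGraph d → ℝ) : ℝ :=
  ∑' G : S, f G

/-- `mono(G)`: the number of lattice bonds not in `G` with both endpoints in `G`. -/
noncomputable def monoCount {d : ℕ} (G : PreGraph d) : ℕ :=
  {b : Sym2 (Site d) | IsLatticeBond b ∧ b ∉ G.bonds ∧ ∀ x ∈ b, x ∈ G.sites}.ncard

/-- `solv(G)`: the number of lattice bonds not in `G` with exactly one endpoint in `G`. -/
noncomputable def solvCount {d : ℕ} (G : PreGraph d) : ℕ :=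
  {b : Sym2 (Site d) | IsLatticeBond b ∧ b ∉ G.bonds ∧
    ∃ x y : Site d, b = s(x, y) ∧ x ∈ G.sites ∧ y ∉ G.sites}.ncard

/-!
Translating, we may take `y = 0`. Choose a bond animal `H` containing the pattern with more sites
than the box `[-r, r]^d` enclosing `P₂`, so that `H` leaves that box, and a box `[-R, R]^d`
enclosing `H`. Inside `[-R, R]^d`, replace `G` by `H` together with all lattice bonds of the
annulus `[-R, R]^d \ [-r, r]^d`. For `d ≥ 2` the annulus is connected; `H` meets it, and it
contains every site of the box adjacent to the outside, so every piece of `G` outside the box gets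
reattached. The pattern survives because neither the annulus nor the part of `G` outside the box
meets `[-r, r]^d`.
-/

open Relation

section

variable {d : ℕ}

namespace PreGraph

instance : Union (PreGraph d) := ⟨fun G H => ⟨G.sites ∪ H.sites, G.bonds ∪ H.bonds⟩⟩

@[simp] lemma sites_union (G H : PreGraph d) : (G ∪ H).sites = G.sites ∪ H.sites := rfl

@[simp] lemma bonds_union (G H : PreGraph d) : (G ∪ H).bonds = G.bonds ∪ H.bonds := rfl

/-- Every pair of sites of `B` counts as a bond of the region, so a bond lies outside it iff it
has an endpoint outside `B`. -/
def region (B : Finset (Site d)) : PreGraph d := ⟨B, B.sym2⟩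

def outside (G : PreGraph d) (B : Finset (Site d)) : PreGraph d :=
  ⟨G.sites \ B, G.bonds \ B.sym2⟩

open scoped Classical in
noncomputable def latticeGraph (A : Finset (Site d)) : PreGraph d :=
  ⟨A, A.sym2.filter IsLatticeBond⟩

lemma mem_latticeGraph_bonds {A : Finset (Site d)} {b : Sym2 (Site d)} :
    b ∈ (latticeGraph A).bonds ↔ b ∈ A.sym2 ∧ IsLatticeBond b := by
  classical
  exact Finset.mem_filter

end PreGraph

open PreGraph

def AgreeOutside (D G G' : PreGraph d) : Prop :=
  G'.sites \ D.sites = G.sites \ D.sites ∧ G'.bonds \ D.bonds = G.bonds \ D.bonds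

instance (G : PreGraph d) : Std.Symm (Adj G) :=
  ⟨fun x y h => by rw [Adj, Sym2.eq_swap]; exact h⟩

lemma reflTransGen_adj_mono {G G' : PreGraph d} (h : G.bonds ⊆ G'.bonds) {x y : Site d}
    (hxy : ReflTransGen (Adj G) x y) : ReflTransGen (Adj G') x y :=
  ReflTransGen.mono (fun _ _ hab => h hab) x y hxy

lemma reflTransGen_of_forall_reflTransGen_hub {G : PreGraph d} (c : Site d)
    (h : ∀ x ∈ G.sites, ReflTransGen (Adj G) x c) :
    ∀ x ∈ G.sites, ∀ y ∈ G.sites, ReflTransGen (Adj G) x y :=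
  fun x hx y hy => (h x hx).trans (Std.Symm.symm _ _ (h y hy))

lemma reflTransGen_of_descent {α : Type*} {r : α → α → Prop} {s : Set α} (f : α → ℕ)
    {c : α} (h : ∀ x ∈ s, x ≠ c → ∃ y ∈ s, r x y ∧ f y < f x) :
    ∀ x ∈ s, ReflTransGen r x c := by
  intro x
  induction x using (measure f).wf.induction with
  | _ x ih =>
    intro hx
    by_cases hxc : x = c
    · rw [hxc]
    · obtain ⟨y, hy, hxy, hlt⟩ := h x hx hxc
      exact .head hxy (ih y hlt hy)

namespace IsAnimalOn

variable {Bd : Sym2 (Site d) → Prop}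

theorem union {G H : PreGraph d} (hG : IsAnimalOn Bd G) (hH : IsAnimalOn Bd H) {c : Site d}
    (hcG : c ∈ G.sites) (hcH : c ∈ H.sites) : IsAnimalOn Bd (G ∪ H) := by
  refine ⟨⟨c, Finset.mem_union_left _ hcG⟩, ?_, ?_,
    reflTransGen_of_forall_reflTransGen_hub c ?_⟩
  · simp only [bonds_union, Finset.mem_union]
    rintro b (hb | hb)
    exacts [hG.2.1 b hb, hH.2.1 b hb]
  · simp only [bonds_union, sites_union, Finset.mem_union]
    rintro b (hb | hb) x hx
    exacts [Or.inl (hG.2.2.1 b hb x hx), Or.inr (hH.2.2.1 b hb x hx)]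
  · simp only [sites_union, Finset.mem_union]
    rintro x (hx | hx)
    · exact reflTransGen_adj_mono Finset.subset_union_left (hG.2.2.2 x hx c hcG)
    · exact reflTransGen_adj_mono Finset.subset_union_right (hH.2.2.2 x hx c hcH)

lemma bonds_subset_sym2 {S : PreGraph d} (hS : IsAnimalOn Bd S) {B : Finset (Site d)}
    (hSB : S.sites ⊆ B) : S.bonds ⊆ B.sym2 :=
  fun b hb => Finset.mem_sym2_iff.2 fun x hx => hSB (hS.2.2.1 b hb x hx)

/-- A path of `G` from a site outside `B` to the site `y ∈ B` enters `B` at a site of `S`. -/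
theorem union_outside {G S : PreGraph d} {B : Finset (Site d)} (hG : IsAnimalOn Bd G)
    (hS : IsAnimalOn Bd S) (hGB : ∃ y ∈ G.sites, y ∈ B)
    (hbdry : ∀ x ∈ B, ∀ z ∉ B, Bd s(x, z) → x ∈ S.sites) :
    IsAnimalOn Bd (S ∪ G.outside B) := by
  obtain ⟨c, hc⟩ := hS.1
  have reach_S : ∀ x ∈ S.sites, ReflTransGen (Adj (S ∪ G.outside B)) x c := fun x hx =>
    reflTransGen_adj_mono Finset.subset_union_left (hS.2.2.2 x hx c hc)
  refine ⟨⟨c, Finset.mem_union_left _ hc⟩, ?_, ?_,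
    reflTransGen_of_forall_reflTransGen_hub c ?_⟩
  · simp only [bonds_union, outside, Finset.mem_union, Finset.mem_sdiff]
    rintro b (hb | ⟨hb, -⟩)
    exacts [hS.2.1 b hb, hG.2.1 b hb]
  · simp only [bonds_union, sites_union, outside, Finset.mem_union, Finset.mem_sdiff]
    rintro b (hb | ⟨hb, hbB⟩) x hx
    · exact Or.inl (hS.2.2.1 b hb x hx)
    by_cases hxB : x ∈ B
    · obtain ⟨z, rfl⟩ := Sym2.mem_iff_exists.1 hx
      have hzB : z ∉ B := fun hzB => hbB (Finset.mk_mem_sym2_iff.2 ⟨hxB, hzB⟩)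
      exact Or.inl (hbdry x hxB z hzB (hG.2.1 _ hb))
    · exact Or.inr ⟨hG.2.2.1 b hb x hx, hxB⟩
  · simp only [sites_union, outside, Finset.mem_union, Finset.mem_sdiff]
    rintro x (hx | ⟨hx, hxB⟩)
    · exact reach_S x hx
    obtain ⟨y, hy, hyB⟩ := hGB
    induction hG.2.2.2 x hx y hy using ReflTransGen.head_induction_on with
    | refl => exact absurd hyB hxB
    | @head a b hab _ ih =>
      have hab' : Adj (S ∪ G.outside B) a b :=
        Finset.mem_union_right _ (Finset.mem_sdiff.2
          ⟨hab, fun h => hxB (Finset.mk_mem_sym2_iff.1 h).1⟩)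
      by_cases hbB : b ∈ B
      · have hba : Bd s(b, a) := Sym2.eq_swap ▸ hG.2.1 _ hab
        exact .head hab' (reach_S b (hbdry b hbB a hxB hba))
      · exact .head hab' (ih (hG.2.2.1 _ hab b (Sym2.mem_mk_right a b)) hbB)

end IsAnimalOn

lemma agreeOutside_union_outside {Bd : Sym2 (Site d) → Prop} {G S : PreGraph d}
    {B : Finset (Site d)} (hS : IsAnimalOn Bd S) (hSB : S.sites ⊆ B) :
    AgreeOutside (region B) G (S ∪ G.outside B) := by
  have hSb := hS.bonds_subset_sym2 hSB
  constructor <;>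
  · simp only [region, outside, sites_union, bonds_union, Finset.union_sdiff_distrib,
      sdiff_idem,       Finset.sdiff_eq_empty_iff_subset.2 hSB,
      Finset.sdiff_eq_empty_iff_subset.2 hSb, Finset.empty_union]

lemma ContainsPattern.union {G K P₁ P₂ : PreGraph d} (h : ContainsPattern G P₁ P₂)
    (hsites : Disjoint P₂.sites K.sites) (hbonds : Disjoint P₂.bonds K.bonds) :
    ContainsPattern (G ∪ K) P₁ P₂ := by
  obtain ⟨h₁, h₂, h₃, h₄⟩ := h
  refine ⟨h₁.trans Finset.subset_union_left, h₂.trans Finset.subset_union_left, ?_, ?_⟩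
  · intro x hx hxGK
    rcases Finset.mem_union.1 hxGK with hxG | hxK
    exacts [h₃ x hx hxG, Finset.disjoint_left.1 hsites hx hxK]
  · intro b hb hbGK
    rcases Finset.mem_union.1 hbGK with hbG | hbK
    exacts [h₄ b hb hbG, Finset.disjoint_left.1 hbonds hb hbK]

lemma Finset.disjoint_sym2 {α : Type*} {s t : Finset α} (h : Disjoint s t) :
    Disjoint s.sym2 t.sym2 :=
  Finset.disjoint_left.2 fun b hs ht =>
    Finset.disjoint_left.1 h (Finset.mem_sym2_iff.1 hs _ (Sym2.out_fst_mem b))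
      (Finset.mem_sym2_iff.1 ht _ (Sym2.out_fst_mem b))

lemma translateCluster_translateCluster (G : PreGraph d) (u v : Site d) :
    translateCluster (translateCluster G u) v = translateCluster G (u + v) := by
  simp only [translateCluster, Finset.image_image, Sym2.map_map, Function.comp_def, add_assoc]

lemma translateCluster_zero (G : PreGraph d) : translateCluster G 0 = G := by
  simp [translateCluster]

lemma IsLatticeBond.map_add {b : Sym2 (Site d)} (hb : IsLatticeBond b) (u : Site d) :
    IsLatticeBond (b.map (· + u)) := by
  obtain ⟨x, y, rfl, hs⟩ := hb
  exact ⟨x + u, y + u, Sym2.map_mk _ _ _, by simpa using hs⟩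

theorem IsBondAnimal.translateCluster {G : PreGraph d} (hG : IsBondAnimal G) (u : Site d) :
    IsBondAnimal (translateCluster G u) := by
  obtain ⟨⟨x, hx⟩, hbd, hend, hconn⟩ := hG
  refine ⟨⟨x + u, Finset.mem_image_of_mem _ hx⟩, ?_, ?_, ?_⟩
  · simp only [_root_.translateCluster, Finset.mem_image]
    rintro _ ⟨b, hb, rfl⟩
    exact (hbd b hb).map_add u
  · simp only [_root_.translateCluster, Finset.mem_image]
    rintro _ ⟨b, hb, rfl⟩ _ hx
    obtain ⟨a, ha, rfl⟩ := Sym2.mem_map.1 hx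
    exact ⟨a, hend b hb a ha, rfl⟩
  · simp only [_root_.translateCluster, Finset.mem_image]
    rintro _ ⟨x, hx, rfl⟩ _ ⟨y, hy, rfl⟩
    exact (hconn x hx y hy).lift (· + u) fun a b hab =>
      Finset.mem_image.2 ⟨_, hab, Sym2.map_mk _ _ _⟩

theorem ContainsPattern.translateCluster {G P₁ P₂ : PreGraph d}
    (h : ContainsPattern G P₁ P₂) (u : Site d) :
    ContainsPattern (translateCluster G u) (translateCluster P₁ u) (translateCluster P₂ u) := by
  obtain ⟨h₁, h₂, h₃, h₄⟩ := h
  have hinj : Function.Injective (Sym2.map (· + u)) := Sym2.map.injective (add_left_injective u)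
  refine ⟨Finset.image_subset_image h₁, Finset.image_subset_image h₂, ?_, ?_⟩
  · simp only [_root_.translateCluster, Finset.mem_image, forall_exists_index, and_imp,
      forall_apply_eq_imp_iff₂, add_left_inj, exists_eq_right]
    exact h₃
  · simp only [_root_.translateCluster, Finset.mem_image, forall_exists_index, and_imp,
      forall_apply_eq_imp_iff₂, hinj.eq_iff, exists_eq_right]
    exact h₄

theorem AgreeOutside.translateCluster {D G G' : PreGraph d} (h : AgreeOutside D G G')
    (u : Site d) :
    AgreeOutside (translateCluster D u) (translateCluster G u) (translateCluster G' u) := by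
  have hinj : Function.Injective (Sym2.map (· + u)) := Sym2.map.injective (add_left_injective u)
  simp only [AgreeOutside, _root_.translateCluster, ← Finset.image_sdiff _ _ hinj,
    ← Finset.image_sdiff _ _ (add_left_injective u), h.1, h.2, and_self]

noncomputable def box (d : ℕ) (R : ℤ) : Finset (Site d) :=
  Fintype.piFinset fun _ => Finset.Icc (-R) R

lemma mem_box {R : ℤ} {x : Site d} : x ∈ box d R ↔ ∀ i, |x i| ≤ R := by
  simp [box, abs_le]

lemma zero_mem_box {R : ℤ} (hR : 0 ≤ R) : (0 : Site d) ∈ box d R :=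
  mem_box.2 fun _ => by simpa using hR

lemma box_mono {r R : ℤ} (h : r ≤ R) : box d r ⊆ box d R :=
  fun _ hx => mem_box.2 fun i => (mem_box.1 hx i).trans h

lemma exists_subset_box (s : Finset (Site d)) : ∃ R, s ⊆ box d R :=
  ⟨∑ x ∈ s, ∑ i, |x i|, fun x hx => mem_box.2 fun i =>
    (Finset.single_le_sum (fun j _ => abs_nonneg (x j)) (Finset.mem_univ i)).trans
      (Finset.single_le_sum (f := fun x : Site d => ∑ i, |x i|)
        (fun y _ => Finset.sum_nonneg fun j _ => abs_nonneg (y j)) hx)⟩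

lemma exists_region_box (P : PreGraph d) :
    ∃ r, P.sites ⊆ box d r ∧ P.bonds ⊆ (box d r).sym2 := by
  obtain ⟨r, hr⟩ := exists_subset_box (P.sites ∪ P.bonds.biUnion Sym2.toFinset)
  refine ⟨r, Finset.subset_union_left.trans hr,
    fun b hb => Finset.mem_sym2_iff.2 fun x hx => hr ?_⟩
  exact (Finset.mem_union_right _ (Finset.mem_biUnion.2 ⟨b, hb, Sym2.mem_toFinset.2 hx⟩))

lemma IsLatticeBond.abs_sub_le_one {x y : Site d} (h : IsLatticeBond s(x, y)) (i : Fin d) :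
    |x i - y i| ≤ 1 := by
  obtain ⟨u, v, huv, hs⟩ := h
  have hsum : ∑ j, |x j - y j| = 1 := by
    rcases Sym2.eq_iff.1 huv with ⟨rfl, rfl⟩ | ⟨rfl, rfl⟩
    · exact hs
    · simpa only [abs_sub_comm] using hs
  exact hsum ▸ Finset.single_le_sum (f := fun j => |x j - y j|) (fun j _ => abs_nonneg _)
    (Finset.mem_univ i)

lemma mem_annulus_of_isLatticeBond {r R : ℤ} (hrR : r < R) {x z : Site d} (hx : x ∈ box d R)
    (hz : z ∉ box d R) (hxz : IsLatticeBond s(x, z)) : x ∈ box d R \ box d r := by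
  refine Finset.mem_sdiff.2 ⟨hx, fun hxr => hz (mem_box.2 fun i => ?_)⟩
  have := abs_sub_abs_le_abs_sub (z i) (x i)
  rw [abs_sub_comm] at this
  linarith [hxz.abs_sub_le_one i, mem_box.1 hxr i, mem_box.1 hx i]

lemma isLatticeBond_update_succ (z : Site d) (j : Fin d) :
    IsLatticeBond s(z, Function.update z j (z j + 1)) := by
  refine ⟨_, _, rfl, ?_⟩
  rw [Finset.sum_eq_single j (fun i _ hij => by simp [Function.update_of_ne hij]) (by simp)]
  simp

/-- Raising `z j` keeps `z` in the annulus because a coordinate `k ≠ j` keeps it outside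
`[-r, r]^d`; this is where `d ≥ 2` enters. -/
lemma exists_update_succ_mem_annulus (hd : 2 ≤ d) {r R : ℤ} {z : Site d}
    (hz : z ∈ box d R \ box d r) (hzc : z ≠ fun _ => R) :
    ∃ j, z j < R ∧ Function.update z j (z j + 1) ∈ box d R \ box d r := by
  simp only [Finset.mem_sdiff, mem_box, not_forall, not_le] at hz
  obtain ⟨hzR, i₁, hi₁⟩ := hz
  obtain ⟨j₀, hj₀⟩ := Function.ne_iff.1 hzc
  have hlt : ∀ j, z j ≠ R → z j < R := fun j hj => lt_of_le_of_ne (abs_le.1 (hzR j)).2 hj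
  obtain ⟨j, hj, k, hkj, hk⟩ : ∃ j, z j < R ∧ ∃ k ≠ j, r < |z k| := by
    by_cases hij : i₁ = j₀
    · subst hij
      have : Nontrivial (Fin d) := Fin.nontrivial_iff_two_le.2 hd
      obtain ⟨k, hk⟩ := exists_ne i₁
      by_cases hkR : z k = R
      · have hR : 0 ≤ R := (abs_nonneg _).trans (hzR i₁)
        exact ⟨i₁, hlt i₁ hj₀, k, hk, by rw [hkR, abs_of_nonneg hR]; linarith [hzR i₁]⟩
      · exact ⟨k, hlt k hkR, i₁, hk.symm, hi₁⟩
    · exact ⟨j₀, hlt j₀ hj₀, i₁, hij, hi₁⟩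
  refine ⟨j, hj, Finset.mem_sdiff.2 ⟨mem_box.2 fun i => ?_, fun h => ?_⟩⟩
  · rcases eq_or_ne i j with rfl | hij
    · have := (abs_le.1 (hzR i)).1
      rw [Function.update_self, abs_le]
      constructor <;> linarith
    · rw [Function.update_of_ne hij]
      exact hzR i
  · have := mem_box.1 h k
    rw [Function.update_of_ne hkj] at this
    linarith

lemma reflTransGen_corner_of_mem_annulus (hd : 2 ≤ d) {r R : ℤ} :
    ∀ z ∈ box d R \ box d r,
      ReflTransGen (Adj (latticeGraph (box d R \ box d r))) z (fun _ => R) := by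
  refine reflTransGen_of_descent (fun z => ∑ i, (R - z i).toNat) fun z hz hzc => ?_
  rw [Finset.mem_coe] at hz
  obtain ⟨j, hj, hmem⟩ := exists_update_succ_mem_annulus hd hz hzc
  refine ⟨_, hmem, ?_, Finset.sum_lt_sum (fun i _ => ?_) ⟨j, Finset.mem_univ _, ?_⟩⟩
  · exact mem_latticeGraph_bonds.2
      ⟨Finset.mk_mem_sym2_iff.2 ⟨hz, hmem⟩, isLatticeBond_update_succ z j⟩
  · rcases eq_or_ne i j with rfl | hij
    · simp only [Function.update_self]; omega
    · simp only [Function.update_of_ne hij, le_refl]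
  · simp only [Function.update_self]; omega

theorem isBondAnimal_latticeGraph_annulus (hd : 2 ≤ d) {r R : ℤ}
    (hne : (box d R \ box d r).Nonempty) : IsBondAnimal (latticeGraph (box d R \ box d r)) := by
  refine ⟨hne, fun b hb => ?_, fun b hb x hx => ?_,
    reflTransGen_of_forall_reflTransGen_hub _ (reflTransGen_corner_of_mem_annulus hd)⟩
  · exact (mem_latticeGraph_bonds.1 hb).2
  · exact Finset.mem_sym2_iff.1 (mem_latticeGraph_bonds.1 hb).1 x hx

lemma ProperFor.exists_not_subset {C : PreGraph d → Prop} {P₁ P₂ : PreGraph d}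
    (h : ProperFor C P₁ P₂) (s : Finset (Site d)) :
    ∃ G, C G ∧ ContainsPattern G P₁ P₂ ∧ ¬ G.sites ⊆ s := by
  obtain ⟨n, ⟨G, hG, rfl, hGP⟩, hn⟩ := h.exists_gt s.card
  exact ⟨G, hG, hGP, fun hsub => (Finset.card_le_card hsub).not_gt hn⟩

theorem exists_local_insertion_at_origin (hd : 2 ≤ d) {P₁ P₂ : PreGraph d}
    (hproper : ProperFor IsBondAnimal P₁ P₂) :
    ∃ B : Finset (Site d), (0 : Site d) ∈ B ∧
      ∀ G, IsBondAnimal G → (0 : Site d) ∈ G.sites →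
        ∃ G', IsBondAnimal G' ∧ ContainsPattern G' P₁ P₂ ∧
          AgreeOutside (region B) G G' := by
  obtain ⟨r, hP₂sites, hP₂bonds⟩ := exists_region_box P₂
  obtain ⟨H, hH, hHP, hHr⟩ := hproper.exists_not_subset (box d r)
  obtain ⟨R, hHR⟩ := exists_subset_box H.sites
  obtain ⟨h₁, hh₁, hh₁r⟩ := Finset.not_subset.1 hHr
  have hh₁A : h₁ ∈ box d R \ box d r := Finset.mem_sdiff.2 ⟨hHR hh₁, hh₁r⟩
  obtain ⟨i, hi⟩ := not_forall.1 (mt mem_box.2 hh₁r)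
  have hiR := mem_box.1 (hHR hh₁) i
  have hrR : r < R := by linarith [not_le.1 hi]
  have h0R : (0 : Site d) ∈ box d R := zero_mem_box ((abs_nonneg _).trans hiR)
  set S := H ∪ latticeGraph (box d R \ box d r)
  have hS : IsBondAnimal S :=
    hH.union (isBondAnimal_latticeGraph_annulus hd ⟨h₁, hh₁A⟩) hh₁ hh₁A
  have hSR : S.sites ⊆ box d R := Finset.union_subset hHR Finset.sdiff_subset
  have hSP : ContainsPattern S P₁ P₂ :=
    hHP.union (Finset.disjoint_of_subset_left hP₂sites Finset.disjoint_sdiff)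
      (Finset.disjoint_of_subset_left hP₂bonds
        ((Finset.disjoint_sym2 Finset.disjoint_sdiff).mono_right
          fun _ hb => (mem_latticeGraph_bonds.1 hb).1))
  refine ⟨box d R, h0R, fun G hG hG0 => ⟨S ∪ G.outside (box d R), ?_, ?_,
    agreeOutside_union_outside hS hSR⟩⟩
  · exact hG.union_outside hS ⟨0, hG0, h0R⟩ fun x hx z hz hxz =>
      Finset.mem_union_right _ (mem_annulus_of_isLatticeBond hrR hx hz hxz)
  · exact hSP.union
      (Finset.disjoint_of_subset_left (hP₂sites.trans (box_mono hrR.le)) Finset.disjoint_sdiff)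
      (Finset.disjoint_of_subset_left (hP₂bonds.trans (Finset.sym2_mono (box_mono hrR.le)))
        Finset.disjoint_sdiff)

end

theorem ca4_bond_animals_general
    (d : ℕ) (hd : 2 ≤ d)
    (P₁ P₂ : PreGraph d)
    (hproper : ProperFor IsBondAnimal P₁ P₂) :
    ∃ D : PreGraph d,
      ∀ G : PreGraph d, IsBondAnimal G → ∀ y ∈ G.sites,
        ∃ (G' : PreGraph d) (t : Site d),
          IsBondAnimal G' ∧
          y ∈ (translateCluster D t).sites ∧
          ContainsPattern G' (translateCluster P₁ t) (translateCluster P₂ t) ∧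
          G'.sites \ (translateCluster D t).sites
            = G.sites \ (translateCluster D t).sites ∧
          G'.bonds \ (translateCluster D t).bonds
            = G.bonds \ (translateCluster D t).bonds := by
  obtain ⟨B, hB0, hB⟩ := exists_local_insertion_at_origin hd hproper
  refine ⟨PreGraph.region B, fun G hG y hy => ?_⟩
  obtain ⟨G₀', hG₀', hpat, hagree⟩ :=
    hB (translateCluster G (-y)) (hG.translateCluster (-y))
      (Finset.mem_image.2 ⟨y, hy, add_neg_cancel y⟩)
  have hback : translateCluster (translateCluster G (-y)) y = G := by
    rw [translateCluster_translateCluster, neg_add_cancel, translateCluster_zero]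
  obtain ⟨hsites, hbonds⟩ := hback ▸ hagree.translateCluster y
  exact ⟨translateCluster G₀' y, y, hG₀'.translateCluster y,
    Finset.mem_image.2 ⟨0, hB0, zero_add y⟩, hpat.translateCluster y, hsites, hbonds⟩

/-- **Local insertion of patterns into bond animals** (Proposition 3.1, Axiom (CA4)
for bond animals on `ℤ^d`). -/
theorem ca4_bond_animals
    (d : ℕ) (hd : 2 ≤ d)
    (P₁ P₂ : PreGraph d) (hP : IsPattern P₁ P₂)
    (hproper : ProperFor IsBondAnimal P₁ P₂) :
    ∃ D : PreGraph d,
      ∀ G : PreGraph d, IsBondAnimal G → ∀ y ∈ G.sites,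
        ∃ (G' : PreGraph d) (t : Site d),
          IsBondAnimal G' ∧
          y ∈ (translateCluster D t).sites ∧
          ContainsPattern G' (translateCluster P₁ t) (translateCluster P₂ t) ∧
          G'.sites \ (translateCluster D t).sites
            = G.sites \ (translateCluster D t).sites ∧
          G'.bonds \ (translateCluster D t).bonds
            = G.bonds \ (translateCluster D t).bonds :=
  ca4_bond_animals_general d hd P₁ P₂ hproper
end

section
/- Ratio convergence from near-monotonicity (Proposition 4.2): Let {a_n : n ≥ 1} be a sequence of positive real numbers and set φ_n = a_{n+1}/a_n. Assume that there exist constants λ ∈ (0,∞) and Γ > 0 such that (a) lim_{n→∞} a_n^{1/n} = λ, (b) liminf_{n→∞} φ_n > 0, and (c) φ_{n+1} φ_n ≥ (φ_n)² − Γ/n for all sufficiently large n. Then lim_{n→∞} φ_n = λ. -/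
open Filter

lemma window_fwd (φ : ℕ → ℝ) (C : ℝ) (hC : 0 ≤ C) (N₀ : ℕ) (hN₀ : 1 ≤ N₀)
    (hstep : ∀ n, N₀ ≤ n → φ n - C / n ≤ φ (n + 1))
    (n : ℕ) (hn : N₀ ≤ n) : ∀ j : ℕ, φ n - C * j / n ≤ φ (n + j) := by
  have hn0 : (0:ℝ) < n := by exact_mod_cast Nat.lt_of_lt_of_le hN₀ hn
  intro j
  induction j with
  | zero => simp
  | succ j ih =>
    have h1 : φ (n + j) - C / (↑(n + j)) ≤ φ (n + j + 1) :=
      hstep (n + j) (le_trans hn (Nat.le_add_right n j))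
    have h2 : C / (↑(n + j) : ℝ) ≤ C / n := by
      exact div_le_div_of_nonneg_left hC hn0 (by exact_mod_cast Nat.le_add_right n j)
    have h3 : C * (↑(j + 1) : ℝ) / n = C * j / n + C / n := by
      push_cast; ring
    have : φ n - C * (↑(j+1):ℝ) / n ≤ φ (n + j) - C / (↑(n+j):ℝ) := by
      rw [h3]; linarith
    calc φ n - C * (↑(j+1):ℝ) / n ≤ φ (n + j + 1) := le_trans this h1
    _ = φ (n + (j+1)) := by ring_nf

lemma window_bwd (φ : ℕ → ℝ) (C : ℝ) (hC : 0 ≤ C) (N₀ : ℕ) (hN₀ : 1 ≤ N₀)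
    (hstep : ∀ n, N₀ ≤ n → φ n - C / n ≤ φ (n + 1))
    (p : ℕ) (hp : N₀ ≤ p) (k : ℕ) :
    ∀ i : ℕ, i ≤ k → φ (p + (k - i)) ≤ φ (p + k) + C * i / p := by
  have hp0 : (0:ℝ) < p := by exact_mod_cast Nat.lt_of_lt_of_le hN₀ hp
  intro i
  induction i with
  | zero => intro _; simp
  | succ i ih =>
    intro hik
    have hik' : i ≤ k := Nat.le_of_succ_le hik
    have hsub : k - (i + 1) + 1 = k - i := by omega
    have hq : N₀ ≤ p + (k - (i+1)) := le_trans hp (Nat.le_add_right _ _)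
    have h1 : φ (p + (k - (i+1))) - C / ↑(p + (k - (i+1))) ≤ φ (p + (k - i)) := by
      have := hstep (p + (k - (i+1))) hq
      rwa [show p + (k - (i+1)) + 1 = p + (k - i) by omega] at this
    have h2 : C / (↑(p + (k - (i+1))) : ℝ) ≤ C / p :=
      div_le_div_of_nonneg_left hC hp0 (by exact_mod_cast Nat.le_add_right _ _)
    have h3 : C * (↑(i + 1) : ℝ) / p = C * i / p + C / p := by push_cast; ring
    have := ih hik'
    rw [h3]
    linarith

lemma prod_ge (a φ : ℕ → ℝ) (ha : ∀ n : ℕ, 1 ≤ n → 0 < a n)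
    (hφ : ∀ n : ℕ, φ n = a (n + 1) / a n) (n : ℕ) (hn : 1 ≤ n) (b : ℝ) (hb : 0 ≤ b) :
    ∀ k : ℕ, (∀ j < k, b ≤ φ (n + j)) → a n * b ^ k ≤ a (n + k) := by
  intro k
  induction k with
  | zero => simp
  | succ k ih =>
    intro h
    have hank : 0 < a (n + k) := ha _ (le_trans hn (Nat.le_add_right n k))
    have heq : a (n + k) * φ (n + k) = a (n + k + 1) := by
      rw [hφ]; field_simp
    calc a n * b ^ (k+1) = (a n * b ^ k) * b := by ring
    _ ≤ a (n + k) * φ (n + k) :=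
        mul_le_mul (ih fun j hj => h j (Nat.lt_succ_of_lt hj)) (h k (Nat.lt_succ_self k)) hb hank.le
    _ = a (n + (k+1)) := by rw [heq]; ring_nf

lemma prod_le (a φ : ℕ → ℝ) (ha : ∀ n : ℕ, 1 ≤ n → 0 < a n)
    (hφ : ∀ n : ℕ, φ n = a (n + 1) / a n) (n : ℕ) (hn : 1 ≤ n) (b : ℝ) :
    ∀ k : ℕ, (∀ j < k, φ (n + j) ≤ b) → a (n + k) ≤ a n * b ^ k := by
  intro k
  induction k with
  | zero => simp
  | succ k ih =>
    intro h
    have hank : 0 < a (n + k) := ha _ (le_trans hn (Nat.le_add_right n k))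
    have hφpos : 0 < φ (n + k) := by
      rw [hφ]; exact div_pos (ha _ (le_trans hn (by omega))) hank
    have heq : a (n + k) * φ (n + k) = a (n + k + 1) := by
      rw [hφ]; field_simp
    have hb : 0 ≤ b := le_trans hφpos.le (h k (Nat.lt_succ_self k))
    calc a (n + (k+1)) = a (n + k) * φ (n + k) := by rw [heq]; ring_nf
    _ ≤ (a n * b ^ k) * b :=
        mul_le_mul (ih fun j hj => h j (Nat.lt_succ_of_lt hj)) (h k (Nat.lt_succ_self k))
          hφpos.le (mul_nonneg (ha n hn).le (pow_nonneg hb k))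
    _ = a n * b ^ (k+1) := by ring

lemma root_bounds (a : ℕ → ℝ) (ha : ∀ n : ℕ, 1 ≤ n → 0 < a n) (lam η : ℝ)
    (hη : 0 < η) (hηlam : η < lam)
    (hroot : Tendsto (fun n : ℕ => a n ^ ((n : ℝ)⁻¹)) atTop (nhds lam)) :
    ∃ N₃ : ℕ, 1 ≤ N₃ ∧ ∀ n, N₃ ≤ n → (lam - η) ^ n ≤ a n ∧ a n ≤ (lam + η) ^ n := by
  have hmem : ∀ᶠ n in atTop, a n ^ ((n : ℝ)⁻¹) ∈ Set.Ioo (lam - η) (lam + η) :=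
    hroot.eventually (Ioo_mem_nhds (by linarith) (by linarith))
  obtain ⟨N, hN⟩ := eventually_atTop.mp hmem
  refine ⟨max N 1, le_max_right _ _, fun n hn => ?_⟩
  have hn1 : 1 ≤ n := le_trans (le_max_right N 1) hn
  have hx := hN n (le_trans (le_max_left N 1) hn)
  have hapos := ha n hn1
  have hxeq : (a n ^ ((n : ℝ)⁻¹)) ^ n = a n :=
    Real.rpow_inv_natCast_pow hapos.le (by omega)
  constructor
  · calc (lam - η) ^ n ≤ (a n ^ ((n : ℝ)⁻¹)) ^ n :=
        pow_le_pow_left₀ (by linarith) hx.1.le n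
    _ = a n := hxeq
  · calc a n = (a n ^ ((n : ℝ)⁻¹)) ^ n := hxeq.symm
    _ ≤ (lam + η) ^ n := pow_le_pow_left₀ (Real.rpow_nonneg hapos.le _) hx.2.le n

lemma claimA (a φ : ℕ → ℝ) (ha : ∀ n : ℕ, 1 ≤ n → 0 < a n)
    (hφ : ∀ n : ℕ, φ n = a (n + 1) / a n) (lam C : ℝ) (hlam0 : 0 < lam) (hC : 0 < C)
    (N₀ : ℕ) (hN₀ : 1 ≤ N₀) (hstep : ∀ n, N₀ ≤ n → φ n - C / n ≤ φ (n + 1))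
    (hroot : Tendsto (fun n : ℕ => a n ^ ((n : ℝ)⁻¹)) atTop (nhds lam))
    (c : ℝ) (hc : lam < c) : ∀ᶠ n in atTop, φ n < c := by
  by_contra hA
  have hfreq : ∀ N : ℕ, ∃ n, N ≤ n ∧ c ≤ φ n := by
    rw [eventually_atTop] at hA; push_neg at hA
    intro N; obtain ⟨n, hn, h⟩ := hA N; exact ⟨n, hn, h⟩
  obtain ⟨M, hM⟩ := exists_nat_ge (max 2 (2 * C / (c - lam)))
  have hM2 : (2:ℝ) ≤ M := le_trans (le_max_left _ _) hM
  have hM2' : 2 ≤ M := by exact_mod_cast hM2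
  have hM0 : (0:ℝ) < M := by linarith
  have hCM : C / M ≤ (c - lam) / 2 := by
    have h1 : 2 * C / (c - lam) ≤ M := le_trans (le_max_right _ _) hM
    have h2 : 2 * C ≤ M * (c - lam) := (div_le_iff₀ (by linarith)).mp h1
    rw [div_le_div_iff₀ hM0 two_pos]; linarith
  set b := c - C / M with hbdef
  have hb : lam < b := by
    have : 0 < C / M := div_pos hC hM0
    simp only [hbdef]; linarith
  -- choose η
  have hval : Tendsto (fun η : ℝ => ((lam + η) / (lam - η)) ^ (2*M) * (lam + η)) (nhds 0) (nhds lam) := by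
    have hcont : ContinuousAt (fun η : ℝ => ((lam + η) / (lam - η)) ^ (2*M) * (lam + η)) 0 := by
      apply ContinuousAt.mul
      · exact (ContinuousAt.div (by fun_prop) (by fun_prop) (by simp [hlam0.ne'])).pow _
      · fun_prop
    have h0 := hcont.tendsto
    simp only [add_zero, sub_zero, div_self hlam0.ne', one_pow, one_mul] at h0
    exact h0
  have hev : ∀ᶠ η in nhds (0:ℝ), ((lam + η) / (lam - η)) ^ (2*M) * (lam + η) < b :=
    hval.eventually_lt_const hb
  have hev2 : ∀ᶠ η in nhds (0:ℝ), η < lam := tendsto_id.eventually_lt_const hlam0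
  obtain ⟨η, ⟨hkey, hηlam⟩, hη0⟩ :=
    (((hev.and hev2).filter_mono (nhdsWithin_le_nhds (s := Set.Ioi (0:ℝ)))).and
      self_mem_nhdsWithin).exists
  have hη0' : (0:ℝ) < η := hη0
  obtain ⟨N₃, hN₃1, hN₃⟩ := root_bounds a ha lam η hη0' hηlam hroot
  -- pick n
  obtain ⟨n, hn, hφn⟩ := hfreq (max (max N₀ N₃) (2*M))
  have hnN₀ : N₀ ≤ n := le_trans (le_trans (le_max_left _ _) (le_max_left _ _)) hn
  have hnN₃ : N₃ ≤ n := le_trans (le_trans (le_max_right _ _) (le_max_left _ _)) hn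
  have hn2M : 2*M ≤ n := le_trans (le_max_right _ _) hn
  have hn1 : 1 ≤ n := by omega
  have hn0 : (0:ℝ) < n := by exact_mod_cast by omega
  set k := n / M with hkdef
  have hk1 : 1 ≤ k := (Nat.one_le_div_iff (by omega)).mpr (by omega)
  have hkM : k * M ≤ n := Nat.div_mul_le_self n M
  have hn2Mk : n ≤ 2 * M * k := by
    have h1 : M * k + n % M = n := Nat.div_add_mod n M
    have h2 : n % M < M := Nat.mod_lt _ (by omega)
    have h3 : M * 1 ≤ M * k := Nat.mul_le_mul_left M hk1
    calc n = M * k + n % M := h1.symm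
    _ ≤ M * k + M := Nat.add_le_add_left h2.le _
    _ ≤ M * k + M * k := Nat.add_le_add_left (by simpa using h3) _
    _ = 2 * M * k := by ring
  -- window
  have hwin : ∀ j, j < k → b ≤ φ (n + j) := by
    intro j hj
    have h1 := window_fwd φ C hC.le N₀ hN₀ hstep n hnN₀ j
    have hjM : ((j:ℝ)) * M ≤ n := by
      exact_mod_cast le_trans (Nat.mul_le_mul_right M hj.le) hkM
    have h2 : C * j / n ≤ C / M := by
      rw [div_le_div_iff₀ hn0 hM0]; nlinarith
    simp only [hbdef]; linarith
  -- product and bounds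
  have hbpos : (0:ℝ) < b := lt_trans hlam0 hb
  have hprod := prod_ge a φ ha hφ n hn1 b hbpos.le k hwin
  have hb1 : (lam - η) ^ n ≤ a n := (hN₃ n hnN₃).1
  have hb2 : a (n + k) ≤ (lam + η) ^ (n + k) := (hN₃ (n + k) (by omega)).2
  have hchain : (lam - η) ^ n * b ^ k ≤ (lam + η) ^ (n + k) := by
    calc (lam - η) ^ n * b ^ k ≤ a n * b ^ k :=
          mul_le_mul_of_nonneg_right hb1 (pow_nonneg hbpos.le k)
    _ ≤ a (n + k) := hprod
    _ ≤ (lam + η) ^ (n + k) := hb2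
  -- strict reverse inequality
  have hl : (0:ℝ) < lam - η := by linarith
  set r := (lam + η) / (lam - η) with hrdef
  have hr1 : (1:ℝ) ≤ r := (one_le_div hl).mpr (by linarith)
  have hpk : (r ^ (2*M) * (lam + η)) ^ k < b ^ k :=
    pow_lt_pow_left₀ hkey (by positivity) (by omega)
  have hrn : r ^ n ≤ r ^ (2*M*k) := pow_le_pow_right₀ hr1 hn2Mk
  have hrpow : r * (lam - η) = lam + η := div_mul_cancel₀ _ (ne_of_gt hl)
  have e1 : (lam + η) ^ (n + k) = (r ^ n * (lam - η) ^ n) * (lam + η) ^ k := by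
    rw [pow_add, ← mul_pow, hrpow]
  have e2 : (r ^ (2*M*k) * (lam - η) ^ n) * (lam + η) ^ k
      = (lam - η) ^ n * (r ^ (2*M) * (lam + η)) ^ k := by
    rw [mul_pow, ← pow_mul]; ring
  have hstrict : (lam + η) ^ (n + k) < (lam - η) ^ n * b ^ k := by
    calc (lam + η) ^ (n + k) = (r ^ n * (lam - η) ^ n) * (lam + η) ^ k := e1
    _ ≤ (r ^ (2*M*k) * (lam - η) ^ n) * (lam + η) ^ k := by
        have := mul_le_mul_of_nonneg_right
          (mul_le_mul_of_nonneg_right hrn (pow_nonneg hl.le n))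
          (pow_nonneg (by linarith : (0:ℝ) ≤ lam + η) k)
        exact this
    _ = (lam - η) ^ n * (r ^ (2*M) * (lam + η)) ^ k := e2
    _ < (lam - η) ^ n * b ^ k := mul_lt_mul_of_pos_left hpk (pow_pos hl n)
  linarith

lemma claimB (a φ : ℕ → ℝ) (ha : ∀ n : ℕ, 1 ≤ n → 0 < a n)
    (hφ : ∀ n : ℕ, φ n = a (n + 1) / a n) (lam C : ℝ) (hlam0 : 0 < lam) (hC : 0 < C)
    (N₀ : ℕ) (hN₀ : 1 ≤ N₀) (hstep : ∀ n, N₀ ≤ n → φ n - C / n ≤ φ (n + 1))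
    (hroot : Tendsto (fun n : ℕ => a n ^ ((n : ℝ)⁻¹)) atTop (nhds lam))
    (c : ℝ) (hc0 : 0 < c) (hc : c < lam) : ∀ᶠ n in atTop, c < φ n := by
  by_contra hA
  have hfreq : ∀ N : ℕ, ∃ n, N ≤ n ∧ φ n ≤ c := by
    rw [eventually_atTop] at hA; push_neg at hA
    intro N; obtain ⟨n, hn, h⟩ := hA N; exact ⟨n, hn, h⟩
  obtain ⟨M, hM⟩ := exists_nat_ge (max 2 (4 * C / (lam - c)))
  have hM2 : (2:ℝ) ≤ M := le_trans (le_max_left _ _) hM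
  have hM2' : 2 ≤ M := by exact_mod_cast hM2
  have hM0 : (0:ℝ) < M := by linarith
  have hCM : 2 * C / M ≤ (lam - c) / 2 := by
    have h1 : 4 * C / (lam - c) ≤ M := le_trans (le_max_right _ _) hM
    have h2 : 4 * C ≤ M * (lam - c) := (div_le_iff₀ (by linarith)).mp h1
    rw [div_le_div_iff₀ hM0 two_pos]; linarith
  set b := c + 2 * C / M with hbdef
  have hbpos : (0:ℝ) < b := by
    have : 0 < 2 * C / M := by positivity
    simp only [hbdef]; linarith
  have hblam : b < lam := by simp only [hbdef]; linarith
  -- choose η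
  have hval : Tendsto (fun η : ℝ => ((lam + η) / (lam - η)) ^ (2*M) * b + η) (nhds 0) (nhds b) := by
    have hcont : ContinuousAt (fun η : ℝ => ((lam + η) / (lam - η)) ^ (2*M) * b + η) 0 := by
      apply ContinuousAt.add _ (by fun_prop)
      apply ContinuousAt.mul _ (by fun_prop)
      exact (ContinuousAt.div (by fun_prop) (by fun_prop) (by simp [hlam0.ne'])).pow _
    have h0 := hcont.tendsto
    simp only [add_zero, sub_zero, div_self hlam0.ne', one_pow, one_mul] at h0
    exact h0
  have hev : ∀ᶠ η in nhds (0:ℝ), ((lam + η) / (lam - η)) ^ (2*M) * b + η < lam :=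
    hval.eventually_lt_const hblam
  have hev2 : ∀ᶠ η in nhds (0:ℝ), η < lam := tendsto_id.eventually_lt_const hlam0
  obtain ⟨η, ⟨hkey, hηlam⟩, hη0⟩ :=
    (((hev.and hev2).filter_mono (nhdsWithin_le_nhds (s := Set.Ioi (0:ℝ)))).and
      self_mem_nhdsWithin).exists
  have hη0' : (0:ℝ) < η := hη0
  obtain ⟨N₃, hN₃1, hN₃⟩ := root_bounds a ha lam η hη0' hηlam hroot
  -- pick n
  obtain ⟨n, hn, hφn⟩ := hfreq (max (max (2*N₀) (2*N₃)) (2*M))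
  have hnN₀ : 2*N₀ ≤ n := le_trans (le_trans (le_max_left _ _) (le_max_left _ _)) hn
  have hnN₃ : 2*N₃ ≤ n := le_trans (le_trans (le_max_right _ _) (le_max_left _ _)) hn
  have hn2M : 2*M ≤ n := le_trans (le_max_right _ _) hn
  have hn1 : 1 ≤ n := by omega
  set k := n / M with hkdef
  have hk1 : 1 ≤ k := (Nat.one_le_div_iff (by omega)).mpr (by omega)
  have hkM : k * M ≤ n := Nat.div_mul_le_self n M
  have hn2Mk : n ≤ 2 * M * k := by
    have h1 : M * k + n % M = n := Nat.div_add_mod n M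
    have h2 : n % M < M := Nat.mod_lt _ (by omega)
    have h3 : M * 1 ≤ M * k := Nat.mul_le_mul_left M hk1
    calc n = M * k + n % M := h1.symm
    _ ≤ M * k + M := Nat.add_le_add_left h2.le _
    _ ≤ M * k + M * k := Nat.add_le_add_left (by simpa using h3) _
    _ = 2 * M * k := by ring
  have hkn2 : 2 * k ≤ n := by
    have : k ≤ n / 2 := Nat.div_le_div_left hM2' (by omega)
    omega
  set p := n - k with hpdef
  have hpk : p + k = n := by omega
  have hpN₀ : N₀ ≤ p := by omega
  have hpN₃ : N₃ ≤ p := by omega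
  have hp1 : 1 ≤ p := by omega
  have hp0 : (0:ℝ) < p := by exact_mod_cast by omega
  have hkM2p : ((k:ℝ)) * M ≤ 2 * p := by
    have h1 : k * M ≤ 2 * p := by omega
    exact_mod_cast h1
  -- window
  have hwin : ∀ j, j < k → φ (p + j) ≤ b := by
    intro j hj
    have hik : k - j ≤ k := Nat.sub_le k j
    have h1 := window_bwd φ C hC.le N₀ hN₀ hstep p hpN₀ k (k - j) hik
    rw [show k - (k - j) = j by omega, hpk] at h1
    have hi : ((k:ℝ) - j) ≥ ((k - j : ℕ) : ℝ) := by push_cast [Nat.cast_sub hj.le]; ring_nf; rfl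
    have h2 : C * ((k - j : ℕ):ℝ) / p ≤ 2 * C / M := by
      rw [div_le_div_iff₀ hp0 hM0]
      have hkj : ((k - j : ℕ):ℝ) ≤ (k:ℝ) := by exact_mod_cast Nat.sub_le k j
      nlinarith [mul_le_mul_of_nonneg_left hkj (by positivity : (0:ℝ) ≤ C * M),
        mul_le_mul_of_nonneg_left hkM2p hC.le]
    simp only [hbdef]; linarith
  -- product and bounds
  have hprod := prod_le a φ ha hφ p hp1 b k hwin
  rw [hpk] at hprod
  have hb1 : (lam - η) ^ n ≤ a n := (hN₃ n (by omega)).1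
  have hb2 : a p ≤ (lam + η) ^ p := (hN₃ p hpN₃).2
  have hchain : (lam - η) ^ n ≤ (lam + η) ^ p * b ^ k := by
    calc (lam - η) ^ n ≤ a n := hb1
    _ ≤ a p * b ^ k := hprod
    _ ≤ (lam + η) ^ p * b ^ k :=
        mul_le_mul_of_nonneg_right hb2 (pow_nonneg hbpos.le k)
  -- strict reverse inequality
  have hl : (0:ℝ) < lam - η := by linarith
  set r := (lam + η) / (lam - η) with hrdef
  have hr1 : (1:ℝ) ≤ r := (one_le_div hl).mpr (by linarith)
  have hkey' : r ^ (2*M) * b < lam - η := by linarith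
  have hpkk : (r ^ (2*M) * b) ^ k < (lam - η) ^ k :=
    pow_lt_pow_left₀ hkey' (by positivity) (by omega)
  have hrn : r ^ p ≤ r ^ (2*M*k) := pow_le_pow_right₀ hr1 (by omega)
  have hrpow : r * (lam - η) = lam + η := div_mul_cancel₀ _ (ne_of_gt hl)
  have hstrict : (lam + η) ^ p * b ^ k < (lam - η) ^ n := by
    calc (lam + η) ^ p * b ^ k = (r ^ p * (lam - η) ^ p) * b ^ k := by
          rw [← mul_pow, hrpow]
    _ ≤ (r ^ (2*M*k) * (lam - η) ^ p) * b ^ k := by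
        exact mul_le_mul_of_nonneg_right
          (mul_le_mul_of_nonneg_right hrn (pow_nonneg hl.le p))
          (pow_nonneg hbpos.le k)
    _ = (lam - η) ^ p * (r ^ (2*M) * b) ^ k := by rw [mul_pow, ← pow_mul]; ring
    _ < (lam - η) ^ p * (lam - η) ^ k := mul_lt_mul_of_pos_left hpkk (pow_pos hl p)
    _ = (lam - η) ^ n := by rw [← pow_add, hpk]
  linarith

/-- **Ratio convergence from near-monotonicity** (Proposition 4.2): if `aₙ > 0` for
`n ≥ 1`, `aₙ^{1/n} → λ ∈ (0,∞)`, `liminf φₙ > 0` where `φₙ = aₙ₊₁/aₙ`, and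
`φₙ₊₁ φₙ ≥ φₙ² − Γ/n` for all sufficiently large `n` (for some constant `Γ > 0`),
then `φₙ → λ`. -/
theorem ratio_convergence_from_near_monotonicity
    (a : ℕ → ℝ) (ha : ∀ n : ℕ, 1 ≤ n → 0 < a n)
    (φ : ℕ → ℝ) (hφ : ∀ n : ℕ, φ n = a (n + 1) / a n)
    (lam Γ : ℝ) (hlam0 : 0 < lam) (hΓ : 0 < Γ)
    (hroot : Tendsto (fun n : ℕ => a n ^ ((n : ℝ)⁻¹)) atTop (nhds lam))
    (hliminf : 0 < liminf φ atTop)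
    (hnear : ∃ N : ℕ, ∀ n ≥ N, φ n ^ 2 - Γ / n ≤ φ (n + 1) * φ n) :
    Tendsto φ atTop (nhds lam) := by
  -- lower bound on φ eventually
  have hφpos : ∀ n : ℕ, 1 ≤ n → 0 < φ n := fun n hn => by
    rw [hφ]; exact div_pos (ha _ (by omega)) (ha _ hn)
  have hbdd : IsBoundedUnder (· ≥ ·) atTop φ := by
    refine ⟨0, eventually_map.mpr ?_⟩
    filter_upwards [eventually_ge_atTop 1] with n hn
    exact (hφpos n hn).le
  set m := liminf φ atTop / 2 with hmdef
  have hm0 : 0 < m := by positivity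
  have hmlt : ∀ᶠ n in atTop, m < φ n :=
    eventually_lt_of_lt_liminf (by simp only [hmdef]; linarith) hbdd
  obtain ⟨N₁, hN₁⟩ := eventually_atTop.mp hmlt
  obtain ⟨N₂, hN₂⟩ := hnear
  set N₀ := max (max N₁ N₂) 1 with hN₀def
  have hN₀1 : 1 ≤ N₀ := le_max_right _ _
  set C := Γ / m with hCdef
  have hC : 0 < C := div_pos hΓ hm0
  have hstep : ∀ n, N₀ ≤ n → φ n - C / n ≤ φ (n + 1) := by
    intro n hn
    have hn1 : 1 ≤ n := le_trans hN₀1 hn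
    have hn0 : (0:ℝ) < n := by exact_mod_cast by omega
    have hm : m < φ n := hN₁ n (le_trans (le_trans (le_max_left _ _) (le_max_left _ _)) hn)
    have hφn : 0 < φ n := lt_trans hm0 hm
    have h1 : φ n ^ 2 - Γ / n ≤ φ (n + 1) * φ n :=
      hN₂ n (le_trans (le_trans (le_max_right _ _) (le_max_left _ _)) hn)
    have key : (φ n - C / ↑n) * φ n ≤ φ (n + 1) * φ n := by
      have e : (φ n - C / ↑n) * φ n = φ n ^ 2 - (Γ * φ n) / (m * ↑n) := by
        simp only [hCdef]; field_simp
      have h2 : Γ / ↑n ≤ (Γ * φ n) / (m * ↑n) := by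
        rw [div_le_div_iff₀ hn0 (by positivity)]
        nlinarith [mul_le_mul_of_nonneg_left hm.le (by positivity : (0:ℝ) ≤ Γ * n)]
      rw [e]; linarith
    exact le_of_mul_le_mul_right key hφn
  rw [tendsto_order]
  constructor
  · intro c hc
    have hcl : max c (lam / 2) < lam := by
      apply max_lt hc; linarith
    have hc0 : 0 < max c (lam / 2) := lt_of_lt_of_le (by linarith) (le_max_right _ _)
    filter_upwards [claimB a φ ha hφ lam C hlam0 hC N₀ hN₀1 hstep hroot
      (max c (lam / 2)) hc0 hcl] with n hn
    exact lt_of_le_of_lt (le_max_left _ _) hn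
  · intro c hc
    exact claimA a φ ha hφ lam C hlam0 hC N₀ hN₀1 hstep hroot c hc
end
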